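/- arXiv:2303.05733 — 5 statements merged into one kernel-verified Lean document; each statement's English description precedes it below -/
import Mathlib

section
/- For every t ≥ 1, the weights α_t^i with α_j = (χ+1)/(χ+j) satisfy 1/√(χ+t) ≤ ∑_{i=1}^t α_t^i / √(χ+i) ≤ 2/√(χ+t). -/
/-!
The sums `S_t = ∑ α_t^i / √(χ + i)` satisfy `S_{t+1} = (1 - α_{t+1}) S_t + α_{t+1} / √(χ + t + 1)`,
a convex combination, so both bounds follow by induction on `t`. The lower bound survives a step
because `1 / √(χ + t)` decreases in `t`; for the upper bound the step comes down, after clearing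
denominators, to `2 t √(χ + t + 1) ≤ (χ + t + 1 + t) √(χ + t)`.
-/

open Finset Real

section WeightedAverage

variable {R : Type*} [CommRing R] (α x : ℕ → R)

def weightedAvg (t : ℕ) : R :=
  ∑ i ∈ Icc 1 t, α i * (∏ j ∈ Icc (i + 1) t, (1 - α j)) * x i

@[simp]
theorem weightedAvg_zero : weightedAvg α x 0 = 0 := by
  simp [weightedAvg]

theorem weightedAvg_succ (t : ℕ) :
    weightedAvg α x (t + 1) = (1 - α (t + 1)) * weightedAvg α x t + α (t + 1) * x (t + 1) := by
  rw [weightedAvg, sum_Icc_succ_top (by omega),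
    Icc_eq_empty (show ¬t + 1 + 1 ≤ t + 1 by omega), prod_empty, weightedAvg, mul_sum]
  congr 1
  · refine sum_congr rfl fun i hi => ?_
    rw [prod_Icc_succ_top (by simp only [mem_Icc] at hi; omega)]
    ring
  · ring

end WeightedAverage

theorem two_mul_mul_sqrt_add_one_le {b c : ℝ} (hb : 0 ≤ b) (hbc : b ≤ c) :
    2 * b * √(c + 1) ≤ (c + 1 + b) * √c := by
  have hc : 0 ≤ c := hb.trans hbc
  rw [← pow_le_pow_iff_left₀ (by positivity) (by positivity) two_ne_zero]
  simp only [mul_pow]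
  rw [sq_sqrt (by linarith), sq_sqrt hc]
  -- AM-GM `4 b (c + 1) ≤ (c + 1 + b)²`, then `b ≤ c`
  nlinarith [mul_nonneg (sq_nonneg (c + 1 - b)) hc,
    mul_nonneg (mul_nonneg hb (by linarith : 0 ≤ c + 1)) (sub_nonneg.2 hbc)]

theorem convex_comb_two_div_sqrt_le {b c : ℝ} (hb : 0 < b) (hbc : b ≤ c) :
    b / (c + 1) * (2 / √c) + (c + 1 - b) / (c + 1) * (1 / √(c + 1)) ≤ 2 / √(c + 1) := by
  have hc : 0 < c := hb.trans_le hbc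
  have hs : 0 < √c := sqrt_pos.2 hc
  have hs' : 0 < √(c + 1) := sqrt_pos.2 (by linarith)
  have key := two_mul_mul_sqrt_add_one_le hb.le hbc
  rw [div_mul_div_comm, div_mul_div_comm, div_add_div _ _ (by positivity) (by positivity),
    div_le_div_iff₀ (by positivity) hs']
  nlinarith [mul_le_mul_of_nonneg_left key (by positivity : (0 : ℝ) ≤ (c + 1) * √c)]

noncomputable def stepSize (χ : ℝ) (j : ℕ) : ℝ := (χ + 1) / (χ + j)

theorem stepSize_one {χ : ℝ} (hχ : 0 < χ) : stepSize χ 1 = 1 := by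
  rw [stepSize, Nat.cast_one, div_self (by linarith)]

theorem one_sub_stepSize_succ {χ : ℝ} (hχ : 0 < χ) (t : ℕ) :
    1 - stepSize χ (t + 1) = t / (χ + t + 1) := by
  rw [stepSize, Nat.cast_succ, ← add_assoc, one_sub_div (by positivity)]
  ring

theorem stepSize_succ (χ : ℝ) (t : ℕ) :
    stepSize χ (t + 1) = (χ + t + 1 - t) / (χ + t + 1) := by
  rw [stepSize, Nat.cast_succ]
  ring

theorem weightedAvg_inv_sqrt_bounds {χ : ℝ} (hχ : 0 < χ) {t : ℕ} (ht : 1 ≤ t) :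
    1 / √(χ + t) ≤ weightedAvg (stepSize χ) (fun i => 1 / √(χ + i)) t ∧
      weightedAvg (stepSize χ) (fun i => 1 / √(χ + i)) t ≤ 2 / √(χ + t) := by
  induction t, ht using Nat.le_induction with
  | base =>
    have h_one : weightedAvg (stepSize χ) (fun i => 1 / √(χ + i)) 1 = 1 / √(χ + (1 : ℕ)) := by
      rw [← zero_add 1, weightedAvg_succ, weightedAvg_zero, zero_add, stepSize_one hχ, mul_zero,
        zero_add, one_mul]
    have h_pos : 0 < √(χ + (1 : ℕ)) := sqrt_pos.2 (by positivity)
    rw [h_one]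
    exact ⟨le_rfl, by gcongr; norm_num⟩
  | succ t ht ih =>
    obtain ⟨ih_lower, ih_upper⟩ := ih
    have hcast : χ + ((t + 1 : ℕ) : ℝ) = χ + t + 1 := by push_cast; ring
    rw [weightedAvg_succ, one_sub_stepSize_succ hχ, stepSize_succ, hcast]
    constructor
    · have hmono : 1 / √(χ + t + 1) ≤ 1 / √(χ + t) :=
        one_div_le_one_div_of_le (sqrt_pos.2 (by positivity)) (sqrt_le_sqrt (by linarith))
      calc 1 / √(χ + t + 1)
          = t / (χ + t + 1) * (1 / √(χ + t + 1))
              + (χ + t + 1 - t) / (χ + t + 1) * (1 / √(χ + t + 1)) := by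
            rw [← add_mul, ← add_div, add_sub_cancel, div_self (by positivity), one_mul]
        _ ≤ _ := by gcongr; exact hmono.trans ih_lower
    · calc _ ≤ t / (χ + t + 1) * (2 / √(χ + t))
              + (χ + t + 1 - t) / (χ + t + 1) * (1 / √(χ + t + 1)) := by gcongr
        _ ≤ _ := convex_comb_two_div_sqrt_le (by positivity) (by linarith)

/-- 1/√(χ+t) ≤ ∑_{i=1}^t α_t^i / √(χ+i) ≤ 2/√(χ+t). -/
theorem stmt_2 (χ : ℝ) (hχ : 0 < χ) (t : ℕ) (ht : 1 ≤ t) :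
    1 / Real.sqrt (χ + t) ≤
      (∑ i ∈ Finset.Icc 1 t,
        ((χ + 1) / (χ + (i : ℝ)) * ∏ j ∈ Finset.Icc (i + 1) t, (1 - (χ + 1) / (χ + (j : ℝ))))
          / Real.sqrt (χ + i)) ∧
    (∑ i ∈ Finset.Icc 1 t,
        ((χ + 1) / (χ + (i : ℝ)) * ∏ j ∈ Finset.Icc (i + 1) t, (1 - (χ + 1) / (χ + (j : ℝ))))
          / Real.sqrt (χ + i)) ≤ 2 / Real.sqrt (χ + t) := by
  simpa only [weightedAvg, stepSize, mul_one_div] using weightedAvg_inv_sqrt_bounds hχ ht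
end

section
/- For every i ≥ 1, the infinite sum ∑_{t=i}^∞ α_t^i converges and equals 1 + 1/χ, where α_j = (χ+1)/(χ+j) and α_t^i = α_i · ∏_{j=i+1}^t (1 - α_j). -/
/-!
With `x k = χ / (χ + i + k)`, the weight `α_{i+n}^i` equals `(1 + 1/χ) · x n · ∏_{k<n} (1 - x k)`:
both are ratios of shifted rising factorials. These are the probabilities of first success at trial
`n` for independent trials with success probabilities `x k`, and they sum to `1` because
`∑ x k` diverges like the harmonic series, which forces `∏_{k<n} (1 - x k) ≤ exp (-∑_{k<n} x k)`
to `0`.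
-/

open Finset Filter Topology

lemma tendsto_prod_range_one_sub_of_not_summable {x : ℕ → ℝ} (hx₀ : ∀ k, 0 ≤ x k)
    (hx₁ : ∀ k, x k ≤ 1) (hx : ¬Summable x) :
    Tendsto (fun n => ∏ k ∈ range n, (1 - x k)) atTop (𝓝 0) := by
  have hsum : Tendsto (fun n => ∑ k ∈ range n, x k) atTop atTop :=
    (not_summable_iff_tendsto_nat_atTop_of_nonneg hx₀).1 hx
  refine squeeze_zero (fun n => prod_nonneg fun k _ => sub_nonneg.2 (hx₁ k)) (fun n => ?_)
    (Real.tendsto_exp_atBot.comp (tendsto_neg_atTop_atBot.comp hsum))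
  calc ∏ k ∈ range n, (1 - x k) ≤ ∏ k ∈ range n, Real.exp (-x k) :=
        prod_le_prod (fun k _ => sub_nonneg.2 (hx₁ k)) fun k _ => Real.one_sub_le_exp_neg _
    _ = Real.exp (-∑ k ∈ range n, x k) := by rw [← sum_neg_distrib, Real.exp_sum]

lemma hasSum_mul_prod_range_one_sub {x : ℕ → ℝ} (hx₀ : ∀ k, 0 ≤ x k) (hx₁ : ∀ k, x k ≤ 1)
    (hx : ¬Summable x) :
    HasSum (fun n => x n * ∏ k ∈ range n, (1 - x k)) 1 := by
  set c : ℕ → ℝ := fun n => ∏ k ∈ range n, (1 - x k)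
  have hc₀ : ∀ n, 0 ≤ c n := fun n => prod_nonneg fun k _ => sub_nonneg.2 (hx₁ k)
  have hstep : ∀ n, x n * c n = c n - c (n + 1) := fun n => by
    simp only [c, prod_range_succ]; ring
  rw [hasSum_iff_tendsto_nat_of_nonneg fun n => mul_nonneg (hx₀ n) (hc₀ n)]
  simp only [hstep, sum_range_sub']
  simpa [c] using (tendsto_prod_range_one_sub_of_not_summable hx₀ hx₁ hx).const_sub 1

lemma not_summable_div_add_natCast {c a : ℝ} (hc : c ≠ 0) (ha : 0 ≤ a) :
    ¬Summable (fun k : ℕ => c / (a + k)) := by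
  intro h
  have h' : Summable (fun k : ℕ => 1 / |(k : ℝ) + a| ^ (1 : ℝ)) := by
    refine (h.mul_left c⁻¹).congr fun k => ?_
    rw [Real.rpow_one, abs_of_nonneg (by positivity), add_comm]
    field_simp
  exact lt_irrefl _ ((Real.summable_one_div_nat_add_rpow a 1).1 h')

/-- Both sides equal `∏_{k<n} (s - χ + k) / ∏_{k≤n} (s + k)`. -/
lemma prod_range_one_sub_div_eq (χ s : ℝ) (hs : ∀ k : ℕ, s + k ≠ 0) (n : ℕ) :
    (∏ k ∈ range n, (1 - (χ + 1) / (s + 1 + k))) / s =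
      (∏ k ∈ range n, (1 - χ / (s + k))) / (s + n) := by
  induction n with
  | zero => simp
  | succ n ih =>
    have h₀ := hs n
    have h₁ : s + (n + 1) ≠ 0 := by exact_mod_cast hs (n + 1)
    have h₁' : s + 1 + n ≠ 0 := by rwa [add_right_comm, add_assoc]
    rw [prod_range_succ, prod_range_succ, mul_div_right_comm, ih]
    generalize ∏ k ∈ range n, (1 - χ / (s + k)) = P
    push_cast
    field_simp
    ring

theorem stmt_3_general (χ : ℝ) (hχ : 0 < χ) (i : ℕ) :
    HasSum
      (fun n : ℕ =>
        (χ + 1) / (χ + (i : ℝ)) *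
          ∏ j ∈ Finset.Icc (i + 1) (i + n), (1 - (χ + 1) / (χ + (j : ℝ))))
      (1 + 1 / χ) := by
  have hpos : ∀ k : ℕ, 0 < χ + i + k := fun k => by positivity
  have hx₀ : ∀ k : ℕ, 0 ≤ χ / (χ + i + k) := fun k => (div_pos hχ (hpos k)).le
  have hx₁ : ∀ k : ℕ, χ / (χ + i + k) ≤ 1 := fun k =>
    div_le_one_of_le₀ (by simp only [add_assoc, le_add_iff_nonneg_right]; positivity) (hpos k).le
  have hsum := (hasSum_mul_prod_range_one_sub hx₀ hx₁
    (not_summable_div_add_natCast hχ.ne' (by positivity))).mul_left (1 + 1 / χ)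
  rw [mul_one] at hsum
  refine hsum.congr_fun fun n => ?_
  rw [← Ico_add_one_right_eq_Icc, prod_Ico_eq_prod_range, show i + n + 1 - (i + 1) = n by omega]
  simp only [Nat.cast_add, Nat.cast_one, ← add_assoc]
  rw [div_mul_eq_mul_div, mul_div_assoc, prod_range_one_sub_div_eq χ (χ + i) (fun k => (hpos k).ne')]
  field_simp

/-- for every i ≥ 1, the series ∑_{t=i}^∞ α_t^i converges and sums to 1 + 1/χ,
where α_t^i = α_i · ∏_{j=i+1}^t (1 - α_j) and α_j = (χ+1)/(χ+j). -/
theorem stmt_3 (χ : ℝ) (hχ : 0 < χ) (i : ℕ) (hi : 1 ≤ i) :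
    HasSum
      (fun n : ℕ =>
        (χ + 1) / (χ + (i : ℝ)) *
          ∏ j ∈ Finset.Icc (i + 1) (i + n), (1 - (χ + 1) / (χ + (j : ℝ))))
      (1 + 1 / χ) :=
  stmt_3_general χ hχ i
end

section
/- Let L_t be a nonnegative Lyapunov function of a Markov chain with L_0 = l_0, drift Δ_t = L_{t+1} − L_t, and suppose: (1) there exist γ > 0 and θ > 0 such that E[Δ_t | S_t = s] ≤ −γ whenever L_t ≥ θ, and (2) |L_{t+1} − L_t| ≤ v almost surely with 0 < γ ≤ v. Then for r = γ/(v² + vγ/3), one has E[e^{r L_t}] ≤ e^{r l_0} + 2 e^{r(v+θ)}/(rγ) for all t. -/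
open MeasureTheory

/-!
Bernstein's bound `e^x ≤ 1 + x + u²/(2(1 - u/3))` for `|x| ≤ u ≤ 1`, applied with `x = rΔ_t` and
`u = rv`, gives `E[e^{rΔ_t} | ℱ_t] ≤ 1 + rγ/2 + r E[Δ_t | ℱ_t]`, which is at most `1 - rγ/2`
where `L_t ≥ θ`; where `L_t < θ` one only uses `e^{rL_{t+1}} ≤ e^{r(θ + v)}`. Hence
`M_t = E[e^{rL_t}]` satisfies `M_{t+1} ≤ (1 - rγ/2) M_t + e^{r(v+θ)}`, and this contraction keeps
`M_t` below `M_0 + 2e^{r(v+θ)}/(rγ)`.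
-/

namespace Real

theorem exp_le_one_add_add_sq_div_of_abs_le {x u : ℝ} (hu : u ≤ 1) (hx : |x| ≤ u) :
    exp x ≤ 1 + x + u ^ 2 / (2 * (1 - u / 3)) := by
  have hu0 : 0 ≤ u := (abs_nonneg x).trans hx
  have htaylor : exp x ≤ 1 + x + x ^ 2 / 2 + x ^ 3 / 6 + |x| ^ 4 * (5 / 96) := by
    have h := exp_bound (hx.trans hu) (n := 4) (by norm_num)
    norm_num [Finset.sum_range_succ, Nat.factorial] at h
    linarith [(abs_le.1 h).2]
  obtain ⟨hxl, hxu⟩ := abs_le.1 hx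
  have h2 : x ^ 2 ≤ u ^ 2 := sq_le_sq' hxl hxu
  have h3 : x ^ 3 ≤ u ^ 3 := by nlinarith [sq_nonneg (x + u), sq_nonneg x]
  have h4 : |x| ^ 4 ≤ u ^ 4 := pow_le_pow_left₀ (abs_nonneg x) hx 4
  have hremainder : u ^ 2 / 2 + u ^ 3 / 6 + u ^ 4 * (5 / 96) ≤ u ^ 2 / (2 * (1 - u / 3)) := by
    rw [le_div_iff₀ (by linarith)]
    nlinarith [pow_nonneg hu0 4, pow_nonneg hu0 3, pow_nonneg hu0 5]
  linarith

end Real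

section DriftRate

variable {r γ v : ℝ}

lemma mul_le_one_of_mul_sq_add_le (hr : 0 ≤ r) (hγ : 0 ≤ γ) (hγv : γ ≤ v)
    (hrate : r * (v ^ 2 + v * γ / 3) ≤ γ) : r * v ≤ 1 := by
  nlinarith [mul_nonneg hr (mul_nonneg hγ (hγ.trans hγv))]

/-- The rate condition `r(v² + vγ/3) ≤ γ` is exactly what bounds Bernstein's quadratic term
`(rv)²/(2(1 - rv/3))` by `rγ/2`. -/
lemma exp_mul_le_one_add_add_of_abs_le (hr : 0 ≤ r) (hγ : 0 ≤ γ) (hγv : γ ≤ v)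
    (hrate : r * (v ^ 2 + v * γ / 3) ≤ γ) {d : ℝ} (hd : |d| ≤ v) :
    Real.exp (r * d) ≤ 1 + r * γ / 2 + r * d := by
  have hrv := mul_le_one_of_mul_sq_add_le hr hγ hγv hrate
  have hrd : |r * d| ≤ r * v := by
    rw [abs_mul, abs_of_nonneg hr]; exact mul_le_mul_of_nonneg_left hd hr
  have hquad : (r * v) ^ 2 / (2 * (1 - r * v / 3)) ≤ r * γ / 2 := by
    rw [div_le_iff₀ (by linarith)]
    nlinarith [mul_le_mul_of_nonneg_left hrate hr]
  linarith [Real.exp_le_one_add_add_sq_div_of_abs_le hrv hrd]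

lemma exp_mul_mul_le_one_sub_mul_add {x c κ θ : ℝ} (hr : 0 ≤ r) (hκ : κ ≤ 1)
    (hcv : c ≤ Real.exp (r * v)) (hcθ : θ ≤ x → c ≤ 1 - κ) :
    Real.exp (r * x) * c ≤ (1 - κ) * Real.exp (r * x) + Real.exp (r * (v + θ)) := by
  have hexp := Real.exp_pos (r * x)
  by_cases hθx : θ ≤ x
  · nlinarith [hcθ hθx, Real.exp_pos (r * (v + θ))]
  · have hxθ : Real.exp (r * x) ≤ Real.exp (r * θ) :=
      Real.exp_le_exp.2 (mul_le_mul_of_nonneg_left (not_le.1 hθx).le hr)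
    have hsplit : Real.exp (r * (v + θ)) = Real.exp (r * θ) * Real.exp (r * v) := by
      rw [← Real.exp_add]; ring_nf
    nlinarith [Real.exp_pos (r * v), mul_nonneg (sub_nonneg.2 hκ) hexp.le]

end DriftRate

lemma le_add_div_of_le_one_sub_mul_add {a : ℕ → ℝ} {b c : ℝ} (ha : 0 ≤ a 0) (hb : 0 ≤ b)
    (hc : 0 < c) (hc1 : c ≤ 1) (hstep : ∀ t, a (t + 1) ≤ (1 - c) * a t + b) (t : ℕ) :
    a t ≤ a 0 + b / c := by
  induction t with
  | zero => linarith [div_nonneg hb hc.le]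
  | succ t ih =>
    calc a (t + 1) ≤ (1 - c) * (a 0 + b / c) + b :=
          (hstep t).trans (by gcongr)
      _ = a 0 + b / c - c * a 0 := by field_simp; ring
      _ ≤ a 0 + b / c := by nlinarith

section OneStep

variable {Ω : Type*} {m m0 : MeasurableSpace Ω} {μ : Measure Ω}

lemma condExp_le_const_add_mul_condExp [IsFiniteMeasure μ] (hm : m ≤ m0) {g f : Ω → ℝ}
    {a b : ℝ} (hg : Integrable g μ) (hf : Integrable f μ) (hgf : ∀ᵐ ω ∂μ, g ω ≤ a + b * f ω) :
    ∀ᵐ ω ∂μ, μ[g|m] ω ≤ a + b * μ[f|m] ω := by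
  have haf : Integrable (fun ω => a + b * f ω) μ := (integrable_const a).add (hf.const_mul b)
  have hlin : μ[fun ω => a + b * f ω|m] =ᵐ[μ] fun ω => a + b * μ[f|m] ω := by
    filter_upwards [condExp_add (integrable_const a) (hf.smul b) m,
      condExp_smul (μ := μ) b f m] with ω hadd hsmul
    simp only [Pi.add_apply, Pi.smul_apply, smul_eq_mul] at hadd hsmul
    rw [show (fun ω => a + b * f ω) = (fun _ => a) + b • f from rfl, hadd, condExp_const hm,
      hsmul]
  exact (condExp_mono hg haf hgf).trans_eq hlin

variable [IsProbabilityMeasure μ] {X Y : Ω → ℝ} {r γ v θ : ℝ}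

theorem integral_exp_mul_le_of_drift (hm : m ≤ m0) (hX : Measurable[m] X)
    (hY : AEStronglyMeasurable Y μ) (hr : 0 ≤ r) (hγ : 0 ≤ γ) (hγv : γ ≤ v)
    (hrate : r * (v ^ 2 + v * γ / 3) ≤ γ)
    (hbdd : ∀ᵐ ω ∂μ, |Y ω - X ω| ≤ v)
    (hdrift : ∀ᵐ ω ∂μ, θ ≤ X ω → μ[fun ω' => Y ω' - X ω'|m] ω ≤ -γ)
    (hintX : Integrable (fun ω => Real.exp (r * X ω)) μ)
    (hintY : Integrable (fun ω => Real.exp (r * Y ω)) μ) :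
    ∫ ω, Real.exp (r * Y ω) ∂μ ≤
      (1 - r * γ / 2) * ∫ ω, Real.exp (r * X ω) ∂μ + Real.exp (r * (v + θ)) := by
  set f : Ω → ℝ := fun ω => Real.exp (r * X ω)
  set g : Ω → ℝ := fun ω => Real.exp (r * (Y ω - X ω))
  have hfg : (fun ω => Real.exp (r * Y ω)) = f * g := by
    ext ω; simp only [f, g, Pi.mul_apply, ← Real.exp_add]; ring_nf
  have hincr_m : AEStronglyMeasurable (fun ω => Y ω - X ω) μ :=
    hY.sub (hX.mono hm le_rfl).aestronglyMeasurable
  have hincr : Integrable (fun ω => Y ω - X ω) μ :=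
    .of_bound hincr_m v (hbdd.mono fun ω h => by rwa [Real.norm_eq_abs])
  have hg_le : ∀ᵐ ω ∂μ, g ω ≤ Real.exp (r * v) := hbdd.mono fun ω h =>
    Real.exp_le_exp.2 (mul_le_mul_of_nonneg_left (abs_le.1 h).2 hr)
  have hg : Integrable g μ :=
    .of_bound (Real.continuous_exp.comp_aestronglyMeasurable (hincr_m.const_mul r))
      (Real.exp (r * v)) <| hg_le.mono fun ω h => by
      rwa [Real.norm_of_nonneg (Real.exp_pos _).le]
  have hcond_le : ∀ᵐ ω ∂μ, μ[g|m] ω ≤ Real.exp (r * v) :=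
    condExp_le_nonneg_const (Real.exp_pos _).le hg_le
  have hcond_drift : ∀ᵐ ω ∂μ, μ[g|m] ω ≤ 1 + r * γ / 2 + r * μ[fun ω' => Y ω' - X ω'|m] ω :=
    condExp_le_const_add_mul_condExp hm hg hincr <|
      hbdd.mono fun ω h => exp_mul_le_one_add_add_of_abs_le hr hγ hγv hrate h
  have hκ : r * γ / 2 ≤ 1 := by
    nlinarith [mul_le_one_of_mul_sq_add_le hr hγ hγv hrate, mul_le_mul_of_nonneg_left hγv hr]
  have hf : StronglyMeasurable[m] f :=
    Real.continuous_exp.comp_stronglyMeasurable (hX.stronglyMeasurable.const_mul r)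
  have hstep : ∀ᵐ ω ∂μ, μ[f * g|m] ω ≤ (1 - r * γ / 2) * f ω + Real.exp (r * (v + θ)) := by
    filter_upwards [condExp_mul_of_stronglyMeasurable_left hf (hfg ▸ hintY) hg, hcond_le,
      hcond_drift, hdrift] with ω hpull hle hdr hθ
    rw [hpull]
    exact exp_mul_mul_le_one_sub_mul_add hr hκ hle fun h => by nlinarith [hθ h]
  calc ∫ ω, Real.exp (r * Y ω) ∂μ = ∫ ω, μ[f * g|m] ω ∂μ := by rw [integral_condExp hm, hfg]
    _ ≤ ∫ ω, ((1 - r * γ / 2) * f ω + Real.exp (r * (v + θ))) ∂μ :=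
      integral_mono_ae integrable_condExp ((hintX.const_mul _).add (integrable_const _)) hstep
    _ = (1 - r * γ / 2) * ∫ ω, f ω ∂μ + Real.exp (r * (v + θ)) := by
      rw [integral_add (hintX.const_mul _) (integrable_const _), integral_const_mul,
        integral_const, probReal_univ, one_smul]

end OneStep

theorem stmt_7_general {Ω : Type*} {m0 : MeasurableSpace Ω} {μ : Measure Ω} [IsProbabilityMeasure μ]
    (ℱ : Filtration ℕ m0) (L : ℕ → Ω → ℝ) (l0 γ v θ : ℝ)
    (hγ : 0 < γ) (hγv : γ ≤ v)
    (hadapted : Adapted ℱ L)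
    (hL0 : ∀ ω, L 0 ω = l0)
    (hbdd : ∀ t, ∀ᵐ ω ∂μ, |L (t + 1) ω - L t ω| ≤ v)
    (hdrift : ∀ t, ∀ᵐ ω ∂μ,
      θ ≤ L t ω → (μ[fun ω' => L (t + 1) ω' - L t ω' | ℱ t]) ω ≤ -γ)
    (r : ℝ) (hr : r = γ / (v ^ 2 + v * γ / 3))
    (hint : ∀ t, Integrable (fun ω => Real.exp (r * L t ω)) μ) :
    ∀ t, ∫ ω, Real.exp (r * L t ω) ∂μ ≤
      Real.exp (r * l0) + 2 * Real.exp (r * (v + θ)) / (r * γ) := by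
  have hv : 0 < v := hγ.trans_le hγv
  have hr0 : 0 < r := by rw [hr]; positivity
  have hrate : r * (v ^ 2 + v * γ / 3) = γ := by rw [hr]; field_simp
  have hκ : r * γ / 2 ≤ 1 := by
    nlinarith [mul_le_one_of_mul_sq_add_le hr0.le hγ.le hγv hrate.le,
      mul_le_mul_of_nonneg_left hγv hr0.le]
  have hstep (t : ℕ) : ∫ ω, Real.exp (r * L (t + 1) ω) ∂μ ≤
      (1 - r * γ / 2) * ∫ ω, Real.exp (r * L t ω) ∂μ + Real.exp (r * (v + θ)) :=
    integral_exp_mul_le_of_drift (ℱ.le t) (hadapted t)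
      ((hadapted (t + 1)).mono (ℱ.le _) le_rfl).aestronglyMeasurable hr0.le hγ.le hγv hrate.le
      (hbdd t) (hdrift t) (hint t) (hint (t + 1))
  have hinit : ∫ ω, Real.exp (r * L 0 ω) ∂μ = Real.exp (r * l0) := by simp [hL0]
  intro t
  calc ∫ ω, Real.exp (r * L t ω) ∂μ
      ≤ ∫ ω, Real.exp (r * L 0 ω) ∂μ + Real.exp (r * (v + θ)) / (r * γ / 2) :=
        le_add_div_of_le_one_sub_mul_add (a := fun t => ∫ ω, Real.exp (r * L t ω) ∂μ)
          (integral_nonneg fun _ => (Real.exp_pos _).le)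
          (Real.exp_pos _).le (by positivity) hκ hstep t
    _ = Real.exp (r * l0) + 2 * Real.exp (r * (v + θ)) / (r * γ) := by
      rw [hinit, div_div_eq_mul_div, mul_comm _ (2 : ℝ)]

/-- Lyapunov drift ⇒ bounded moment generating function: if a nonnegative
adapted process `L` with `L 0 = l0` has one-step increments bounded by `v` a.s. and
conditional expected drift at most `−γ` whenever `L t ≥ θ`, with `0 < γ ≤ v`, then for
`r = γ/(v² + vγ/3)` we have `E[e^{r L t}] ≤ e^{r l0} + 2 e^{r(v+θ)}/(rγ)` for all `t`. -/
theorem stmt_7 {Ω : Type*} {m0 : MeasurableSpace Ω} {μ : Measure Ω} [IsProbabilityMeasure μ]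
    (ℱ : Filtration ℕ m0) (L : ℕ → Ω → ℝ) (l0 γ v θ : ℝ)
    (hγ : 0 < γ) (hθ : 0 < θ) (hγv : γ ≤ v)
    (hadapted : Adapted ℱ L)
    (hL0 : ∀ ω, L 0 ω = l0)
    (hLnonneg : ∀ t ω, 0 ≤ L t ω)
    (hbdd : ∀ t, ∀ᵐ ω ∂μ, |L (t + 1) ω - L t ω| ≤ v)
    (hdrift : ∀ t, ∀ᵐ ω ∂μ,
      θ ≤ L t ω → (μ[fun ω' => L (t + 1) ω' - L t ω' | ℱ t]) ω ≤ -γ)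
    (r : ℝ) (hr : r = γ / (v ^ 2 + v * γ / 3))
    (hint : ∀ t, Integrable (fun ω => Real.exp (r * L t ω)) μ) :
    ∀ t, ∫ ω, Real.exp (r * L t ω) ∂μ ≤
      Real.exp (r * l0) + 2 * Real.exp (r * (v + θ)) / (r * γ) :=
  stmt_7_general ℱ L l0 γ v θ hγ hγv hadapted hL0 hbdd hdrift r hr hint
end

section
/- Consider a linear program over occupation measures q_h(x,a) ≥ 0 on [H]×S×A with flow conservation, normalization, fixed initial distribution, and constraint ∑_{h,x,a} q_h(x,a) g_h(x,a) ≥ ρ, with rewards r_h(x,a) ∈ [0,1]. Suppose there exists a feasible q^{ξ} with ∑_{h,x,a} q^{ξ}_h(x,a) g_h(x,a) ≥ ρ + δ (Slater's condition). Then for any 0 < ε ≤ δ, the optimal value of the LP exceeds the optimal value of the ε-tightened LP (with constraint ≥ ρ + ε) by at most Hε/δ. -/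
/-!
Mix the optimum `q*` of the original LP with the Slater point `q^ξ` in proportion `t = ε / δ`.
All other constraints are linear equalities or sign conditions, so the mixture satisfies them,
and its utility is at least `(1 - t) ρ + t (ρ + δ) = ρ + ε`; hence it is feasible for the
tightened LP. Its reward is `(1 - t) V(q*) + t V(q^ξ) ≥ V(q*) - t V(q*)`, and `V(q*) ≤ H`
because each `q* h` is a probability distribution and rewards lie in `[0, 1]`.
-/

open Finset

/-- Feasibility for the occupation-measure LP with utility constraint level `level`:
nonnegativity, flow conservation, per-step normalization, fixed initial distribution,
and cumulative utility at least `level`. -/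
def LPFeasible {S A : Type} [Fintype S] [Fintype A] (H : ℕ)
    (P : ℕ → S → A → S → ℝ) (g : ℕ → S → A → ℝ) (μ0 : S → ℝ) (level : ℝ)
    (q : ℕ → S → A → ℝ) : Prop :=
  (∀ h x a, 0 ≤ q h x a) ∧
  (∀ h, 2 ≤ h → h ≤ H → ∀ x : S,
    ∑ a : A, q h x a = ∑ x' : S, ∑ a' : A, P (h - 1) x' a' x * q (h - 1) x' a') ∧
  (∀ h, 1 ≤ h → h ≤ H → ∑ x : S, ∑ a : A, q h x a = 1) ∧
  (∀ x : S, ∑ a : A, q 1 x a = μ0 x) ∧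
  (level ≤ ∑ h ∈ Finset.Icc 1 H, ∑ x : S, ∑ a : A, q h x a * g h x a)

/-- Objective value of the occupation-measure LP. -/
def LPValue {S A : Type} [Fintype S] [Fintype A] (H : ℕ)
    (r : ℕ → S → A → ℝ) (q : ℕ → S → A → ℝ) : ℝ :=
  ∑ h ∈ Finset.Icc 1 H, ∑ x : S, ∑ a : A, q h x a * r h x a

section LinearStructure

variable {S A : Type} [Fintype S] [Fintype A] {H : ℕ}

lemma LPValue_add (r u v : ℕ → S → A → ℝ) :
    LPValue H r (u + v) = LPValue H r u + LPValue H r v := by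
  simp only [LPValue, Pi.add_apply, add_mul, sum_add_distrib]

lemma LPValue_smul (r q : ℕ → S → A → ℝ) (c : ℝ) :
    LPValue H r (c • q) = c * LPValue H r q := by
  simp only [LPValue, Pi.smul_apply, smul_eq_mul, mul_sum, mul_assoc]

lemma LPValue_nonneg {r q : ℕ → S → A → ℝ} (hr : ∀ h x a, 0 ≤ r h x a)
    (hq : ∀ h x a, 0 ≤ q h x a) : 0 ≤ LPValue H r q :=
  sum_nonneg fun h _ => sum_nonneg fun x _ => sum_nonneg fun a _ =>
    mul_nonneg (hq h x a) (hr h x a)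

lemma LPFeasible.LPValue_le {P : ℕ → S → A → S → ℝ} {g : ℕ → S → A → ℝ} {μ0 : S → ℝ}
    {level : ℝ} {r q : ℕ → S → A → ℝ} (hq : LPFeasible H P g μ0 level q)
    (hr : ∀ h x a, r h x a ≤ 1) : LPValue H r q ≤ H := by
  obtain ⟨hq_nonneg, -, hq_norm, -, -⟩ := hq
  calc LPValue H r q ≤ ∑ h ∈ Icc 1 H, ∑ x : S, ∑ a : A, q h x a :=
        sum_le_sum fun h _ => sum_le_sum fun x _ => sum_le_sum fun a _ =>
          mul_le_of_le_one_right (hq_nonneg h x a) (hr h x a)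
    _ = ∑ h ∈ Icc 1 H, (1 : ℝ) :=
        sum_congr rfl fun h hh => hq_norm h (mem_Icc.1 hh).1 (mem_Icc.1 hh).2
    _ = H := by simp

lemma LPFeasible.convex_comb {P : ℕ → S → A → S → ℝ} {g : ℕ → S → A → ℝ} {μ0 : S → ℝ}
    {a b t : ℝ} {q q' : ℕ → S → A → ℝ} (hq : LPFeasible H P g μ0 a q)
    (hq' : LPFeasible H P g μ0 b q') (ht0 : 0 ≤ t) (ht1 : t ≤ 1) :
    LPFeasible H P g μ0 ((1 - t) * a + t * b) ((1 - t) • q + t • q') := by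
  obtain ⟨hq_nonneg, hq_flow, hq_norm, hq_init, hq_level⟩ := hq
  obtain ⟨hq'_nonneg, hq'_flow, hq'_norm, hq'_init, hq'_level⟩ := hq'
  simp only [LPFeasible, Pi.add_apply, Pi.smul_apply, smul_eq_mul]
  refine ⟨fun h x a => ?_, fun h h2 hH x => ?_, fun h h1 hH => ?_, fun x => ?_, ?_⟩
  · have := hq_nonneg h x a
    have := hq'_nonneg h x a
    positivity
  · rw [sum_add_distrib, ← mul_sum, ← mul_sum, hq_flow h h2 hH x, hq'_flow h h2 hH x,
      mul_sum, mul_sum, ← sum_add_distrib]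
    refine sum_congr rfl fun x' _ => ?_
    rw [mul_sum, mul_sum, ← sum_add_distrib]
    exact sum_congr rfl fun a' _ => by ring
  · simp only [sum_add_distrib, ← mul_sum, hq_norm h h1 hH, hq'_norm h h1 hH]
    ring
  · simp only [sum_add_distrib, ← mul_sum, hq_init x, hq'_init x]
    ring
  · simp only [add_mul, mul_assoc, sum_add_distrib, ← mul_sum]
    gcongr

end LinearStructure

theorem stmt_9_general {S A : Type} [Fintype S] [Fintype A] (H : ℕ)
    (P : ℕ → S → A → S → ℝ)
    (r g : ℕ → S → A → ℝ)
    (hr : ∀ h x a, 0 ≤ r h x a ∧ r h x a ≤ 1)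
    (μ0 : S → ℝ) (ρ δ ε : ℝ)
    (hδ : 0 < δ) (hε : 0 < ε) (hεδ : ε ≤ δ)
    (qxi qstar qeps : ℕ → S → A → ℝ)
    (hslater : LPFeasible H P g μ0 (ρ + δ) qxi)
    (hstar_feas : LPFeasible H P g μ0 ρ qstar)
    (heps_opt : ∀ q, LPFeasible H P g μ0 (ρ + ε) q → LPValue H r q ≤ LPValue H r qeps) :
    LPValue H r qstar - LPValue H r qeps ≤ H * ε / δ := by
  set t := ε / δ with ht
  have ht0 : 0 ≤ t := by positivity
  have hmix := hstar_feas.convex_comb hslater ht0 ((div_le_one hδ).2 hεδ)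
  have hlevel : (1 - t) * ρ + t * (ρ + δ) = ρ + ε := by
    rw [ht]
    field_simp
    ring
  rw [hlevel] at hmix
  have hmix_le := heps_opt _ hmix
  rw [LPValue_add, LPValue_smul, LPValue_smul] at hmix_le
  have hxi := LPValue_nonneg (H := H) (fun h x a => (hr h x a).1) hslater.1
  have hstar := hstar_feas.LPValue_le fun h x a => (hr h x a).2
  calc LPValue H r qstar - LPValue H r qeps
      ≤ t * LPValue H r qstar - t * LPValue H r qxi := by linarith
    _ ≤ t * LPValue H r qstar := sub_le_self _ (mul_nonneg ht0 hxi)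
    _ ≤ t * H := by gcongr
    _ = H * ε / δ := by rw [ht]; ring

/-- under Slater's condition with margin δ, for any 0 < ε ≤ δ the optimal
value of the LP exceeds the optimal value of the ε-tightened LP by at most Hε/δ. -/
theorem stmt_9 {S A : Type} [Fintype S] [Fintype A] (H : ℕ) (hH : 1 ≤ H)
    (P : ℕ → S → A → S → ℝ) (hP : ∀ h x a x', 0 ≤ P h x a x')
    (r g : ℕ → S → A → ℝ)
    (hr : ∀ h x a, 0 ≤ r h x a ∧ r h x a ≤ 1)
    (hg : ∀ h x a, 0 ≤ g h x a ∧ g h x a ≤ 1)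
    (μ0 : S → ℝ) (ρ δ ε : ℝ) (hρ0 : 0 ≤ ρ) (hρH : ρ ≤ H)
    (hδ : 0 < δ) (hε : 0 < ε) (hεδ : ε ≤ δ)
    (qxi qstar qeps : ℕ → S → A → ℝ)
    (hslater : LPFeasible H P g μ0 (ρ + δ) qxi)
    (hstar_feas : LPFeasible H P g μ0 ρ qstar)
    (hstar_opt : ∀ q, LPFeasible H P g μ0 ρ q → LPValue H r q ≤ LPValue H r qstar)
    (heps_feas : LPFeasible H P g μ0 (ρ + ε) qeps)
    (heps_opt : ∀ q, LPFeasible H P g μ0 (ρ + ε) q → LPValue H r q ≤ LPValue H r qeps) :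
    LPValue H r qstar - LPValue H r qeps ≤ H * ε / δ :=
  stmt_9_general H P r g hr μ0 ρ δ ε hδ hε hεδ qxi qstar qeps hslater hstar_feas heps_opt
end

section
/- Let {φ_k}_{k=1}^K be vectors in ℝ^d with ‖φ_k‖ ≤ 1, let Λ_1 = λ I with λ ≥ 1, and Λ_{k+1} = Λ_k + φ_k φ_k^T. Then ∑_{k=1}^K φ_k^T Λ_k^{-1} φ_k ≤ 2 log(det(Λ_{K+1}) / det(Λ_1)) ≤ 2 d log((λ + K)/λ). -/
/-!
By the matrix determinant lemma, `det Λ_{k+1} = det Λ_k * (1 + x_k)` with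
`x_k = φ_kᵀ Λ_k⁻¹ φ_k`, so `log (det Λ_K / det Λ_0) = ∑ log (1 + x_k)`. Since `Λ_k ≥ λ I ≥ I`
and `‖φ_k‖ ≤ 1`, each `x_k` lies in `[0, 1]`, where `x ≤ 2 log (1 + x)`. For the second bound,
every eigenvalue of `Λ_K` is a Rayleigh quotient `λ + ∑ (φ_τᵀ v)² ≤ λ + K`, so
`det Λ_K ≤ (λ + K)^d` while `det Λ_0 = λ^d`.
-/

open Finset Matrix

/-- Gram matrix Λ_k = λ I + ∑_{τ<k} φ_τ φ_τᵀ. -/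
noncomputable def GramLam (d : ℕ) (lam : ℝ) (φ : ℕ → Fin d → ℝ) (k : ℕ) :
    Matrix (Fin d) (Fin d) ℝ :=
  lam • (1 : Matrix (Fin d) (Fin d) ℝ) + ∑ τ ∈ Finset.range k, Matrix.vecMulVec (φ τ) (φ τ)

theorem Real.le_two_mul_log_one_add {x : ℝ} (hx0 : 0 ≤ x) (hx1 : x ≤ 1) :
    x ≤ 2 * Real.log (1 + x) := by
  have hlog := Real.one_sub_inv_le_log_of_pos (by linarith : 0 < 1 + x)
  have hx : x / 2 ≤ 1 - (1 + x)⁻¹ := by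
    field_simp
    nlinarith
  linarith

namespace Matrix

variable {n : Type*} [Fintype n]

theorem dotProduct_sq_le (u v : n → ℝ) : (u ⬝ᵥ v) ^ 2 ≤ (u ⬝ᵥ u) * (v ⬝ᵥ v) := by
  simpa only [dotProduct, sq] using sum_mul_sq_le_sq_mul_sq univ u v

theorem dotProduct_self_nonneg (v : n → ℝ) : 0 ≤ v ⬝ᵥ v := by
  simpa using dotProduct_star_self_nonneg v

variable [DecidableEq n]

theorem det_add_vecMulVec {R : Type*} [CommRing R] {A : Matrix n n R} (hA : IsUnit A.det)
    (u v : n → R) : (A + vecMulVec u v).det = A.det * (1 + v ⬝ᵥ (A⁻¹ *ᵥ u)) := by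
  have hfactor : A + vecMulVec u v = A * (1 + vecMulVec (A⁻¹ *ᵥ u) v) := by
    rw [Matrix.mul_add, Matrix.mul_one, mul_vecMulVec, mulVec_mulVec, mul_nonsing_inv _ hA,
      one_mulVec]
  rw [hfactor, det_mul, vecMulVec_eq Unit, det_one_add_replicateCol_mul_replicateRow]

theorem dotProduct_nonsing_inv_mulVec_mem_Icc {A : Matrix n n ℝ} (hA : IsUnit A.det)
    (hA_ge : ∀ x, x ⬝ᵥ x ≤ x ⬝ᵥ (A *ᵥ x)) {u : n → ℝ} (hu : u ⬝ᵥ u ≤ 1) :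
    u ⬝ᵥ (A⁻¹ *ᵥ u) ∈ Set.Icc 0 1 := by
  set w := A⁻¹ *ᵥ u
  have hAw : A *ᵥ w = u := by rw [mulVec_mulVec, mul_nonsing_inv _ hA, one_mulVec]
  have hww : w ⬝ᵥ w ≤ u ⬝ᵥ w := by
    simpa only [hAw, dotProduct_comm w u] using hA_ge w
  have hcs := dotProduct_sq_le u w
  have hw0 := dotProduct_self_nonneg w
  constructor <;> nlinarith

theorem IsHermitian.eigenvalues_le {A : Matrix n n ℝ} (hA : A.IsHermitian) {c : ℝ}
    (hA_le : ∀ x, x ⬝ᵥ (A *ᵥ x) ≤ c * (x ⬝ᵥ x)) (i : n) : hA.eigenvalues i ≤ c := by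
  have hunit : (hA.eigenvectorBasis i : n → ℝ) ⬝ᵥ hA.eigenvectorBasis i = 1 := by
    have h := real_inner_self_eq_norm_sq (hA.eigenvectorBasis i)
    rw [EuclideanSpace.inner_eq_star_dotProduct, hA.eigenvectorBasis.orthonormal.1 i] at h
    simpa using h
  simpa [hA.eigenvalues_eq i, hunit] using hA_le (hA.eigenvectorBasis i)

theorem PosDef.det_le_pow {A : Matrix n n ℝ} (hA : A.PosDef) {c : ℝ}
    (hA_le : ∀ x, x ⬝ᵥ (A *ᵥ x) ≤ c * (x ⬝ᵥ x)) : A.det ≤ c ^ Fintype.card n := by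
  rw [hA.isHermitian.det_eq_prod_eigenvalues, ← card_univ, ← prod_const]
  exact prod_le_prod (fun i _ => (hA.eigenvalues_pos i).le)
    fun i _ => hA.isHermitian.eigenvalues_le hA_le i

end Matrix

section GramLam

variable {d : ℕ} {lam : ℝ} {φ : ℕ → Fin d → ℝ}

theorem GramLam_succ (k : ℕ) :
    GramLam d lam φ (k + 1) = GramLam d lam φ k + vecMulVec (φ k) (φ k) := by
  simp only [GramLam, sum_range_succ, add_assoc]

theorem det_GramLam_zero : (GramLam d lam φ 0).det = lam ^ d := by
  simp [GramLam]

theorem dotProduct_GramLam_mulVec (k : ℕ) (x : Fin d → ℝ) :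
    x ⬝ᵥ (GramLam d lam φ k *ᵥ x) = lam * (x ⬝ᵥ x) + ∑ τ ∈ range k, (φ τ ⬝ᵥ x) ^ 2 := by
  simp only [GramLam, add_mulVec, smul_mulVec, one_mulVec, sum_mulVec, vecMulVec_mulVec,
    op_smul_eq_smul, dotProduct_add, dotProduct_smul, dotProduct_sum, smul_eq_mul]
  congr 1
  refine sum_congr rfl fun τ _ => ?_
  rw [dotProduct_comm x, sq]

theorem posDef_GramLam (hlam : 0 < lam) (k : ℕ) : (GramLam d lam φ k).PosDef :=
  (PosDef.one.smul hlam).add_posSemidef <|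
    posSemidef_sum _ fun τ _ => by simpa using posSemidef_vecMulVec_self_star (φ τ)

theorem det_GramLam (hlam : 0 < lam) (K : ℕ) :
    (GramLam d lam φ K).det =
      (GramLam d lam φ 0).det * ∏ k ∈ range K, (1 + φ k ⬝ᵥ ((GramLam d lam φ k)⁻¹ *ᵥ φ k)) := by
  induction K with
  | zero => simp
  | succ K ih =>
    rw [GramLam_succ, det_add_vecMulVec (posDef_GramLam hlam K).det_pos.ne'.isUnit, ih,
      prod_range_succ, mul_assoc]

theorem dotProduct_GramLam_inv_mulVec_mem_Icc (hlam : 1 ≤ lam) {k : ℕ}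
    (hφk : φ k ⬝ᵥ φ k ≤ 1) :
    φ k ⬝ᵥ ((GramLam d lam φ k)⁻¹ *ᵥ φ k) ∈ Set.Icc 0 1 := by
  refine dotProduct_nonsing_inv_mulVec_mem_Icc
    (posDef_GramLam (by linarith) k).det_pos.ne'.isUnit (fun x => ?_) hφk
  have hsq : 0 ≤ ∑ τ ∈ range k, (φ τ ⬝ᵥ x) ^ 2 := sum_nonneg fun τ _ => sq_nonneg _
  rw [dotProduct_GramLam_mulVec]
  nlinarith [dotProduct_self_nonneg x]

theorem dotProduct_GramLam_mulVec_le {K : ℕ} (hφ : ∀ k < K, φ k ⬝ᵥ φ k ≤ 1)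
    (x : Fin d → ℝ) : x ⬝ᵥ (GramLam d lam φ K *ᵥ x) ≤ (lam + K) * (x ⬝ᵥ x) := by
  have hsq : ∑ τ ∈ range K, (φ τ ⬝ᵥ x) ^ 2 ≤ ∑ τ ∈ range K, x ⬝ᵥ x :=
    sum_le_sum fun τ hτ => (dotProduct_sq_le _ _).trans <|
      mul_le_of_le_one_left (dotProduct_self_nonneg x) (hφ τ (mem_range.mp hτ))
  rw [sum_const, card_range, nsmul_eq_mul] at hsq
  rw [dotProduct_GramLam_mulVec]
  linarith

end GramLam

theorem stmt_13_general (d K : ℕ) (lam : ℝ) (hlam : 1 ≤ lam)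
    (φ : ℕ → Fin d → ℝ) (hφ : ∀ k < K, ∑ i, (φ k i) ^ 2 ≤ 1) :
    (∑ k ∈ Finset.range K, φ k ⬝ᵥ ((GramLam d lam φ k)⁻¹ *ᵥ φ k) ≤
        2 * Real.log ((GramLam d lam φ K).det / (GramLam d lam φ 0).det)) ∧
    2 * Real.log ((GramLam d lam φ K).det / (GramLam d lam φ 0).det) ≤
        2 * d * Real.log ((lam + K) / lam) := by
  have hlam0 : 0 < lam := by linarith
  have hφ' : ∀ k < K, φ k ⬝ᵥ φ k ≤ 1 := fun k hk => by simpa [dotProduct, sq] using hφ k hk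
  have hx k (hk : k ∈ range K) := dotProduct_GramLam_inv_mulVec_mem_Icc (φ := φ) hlam
    (hφ' k (mem_range.mp hk))
  have hratio : (GramLam d lam φ K).det / (GramLam d lam φ 0).det =
      ∏ k ∈ range K, (1 + φ k ⬝ᵥ ((GramLam d lam φ k)⁻¹ *ᵥ φ k)) := by
    rw [det_GramLam hlam0 K, mul_div_cancel_left₀ _ (posDef_GramLam hlam0 0).det_pos.ne']
  constructor
  · rw [hratio, Real.log_prod fun k hk => by linarith [(hx k hk).1], mul_sum]
    exact sum_le_sum fun k hk => Real.le_two_mul_log_one_add (hx k hk).1 (hx k hk).2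
  · have hdet : (GramLam d lam φ K).det ≤ (lam + K) ^ d := by
      simpa using (posDef_GramLam hlam0 K).det_le_pow (dotProduct_GramLam_mulVec_le hφ')
    have hratio_le : (GramLam d lam φ K).det / (GramLam d lam φ 0).det ≤ ((lam + K) / lam) ^ d := by
      rw [div_pow, det_GramLam_zero]
      gcongr
    rw [mul_assoc, ← Real.log_pow]
    gcongr
    exact div_pos (posDef_GramLam hlam0 K).det_pos (posDef_GramLam hlam0 0).det_pos

/-- elliptical potential lemma:
∑_{k=1}^K φ_kᵀ Λ_k⁻¹ φ_k ≤ 2 log(det Λ_{K+1} / det Λ_1) ≤ 2 d log((λ+K)/λ). -/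
theorem stmt_13 (d K : ℕ) (hd : 0 < d) (hK : 0 < K) (lam : ℝ) (hlam : 1 ≤ lam)
    (φ : ℕ → Fin d → ℝ) (hφ : ∀ k < K, ∑ i, (φ k i) ^ 2 ≤ 1) :
    (∑ k ∈ Finset.range K, φ k ⬝ᵥ ((GramLam d lam φ k)⁻¹ *ᵥ φ k) ≤
        2 * Real.log ((GramLam d lam φ K).det / (GramLam d lam φ 0).det)) ∧
    2 * Real.log ((GramLam d lam φ K).det / (GramLam d lam φ 0).det) ≤
        2 * d * Real.log ((lam + K) / lam) :=
  stmt_13_general d K lam hlam φ hφ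
end
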